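/- arXiv:2102.03963 — 2 statements merged into one kernel-verified Lean document; each statement's English description precedes it below -/
import Mathlib

section
/- If M and N are isometries (M^H M = I, N^H N = I) with M^H N = A/‖A‖_F for a matrix A with SVD A = Σᵢ σᵢ uᵢ vᵢ^H, then the reflection product W = (2NN^H − I)(2MM^H − I) satisfies W(M uᵢ) = (2σᵢ/‖A‖_F) N vᵢ − M uᵢ. -/
open Matrix

section Reflection

variable {R m n : Type*} [Fintype m] [Fintype n] [DecidableEq m] [CommRing R] [StarRing R]

theorem reflection_mulVec (P : Matrix m n R) (y : m → R) :
    ((2 : R) • (P * Pᴴ) - 1) *ᵥ y = (2 : R) • (P *ᵥ (Pᴴ *ᵥ y)) - y := by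
  rw [sub_mulVec, smul_mulVec, one_mulVec, mulVec_mulVec]

theorem reflection_mulVec_range_of_isometry [DecidableEq n] {P : Matrix m n R}
    (hP : Pᴴ * P = 1) (x : n → R) :
    ((2 : R) • (P * Pᴴ) - 1) *ᵥ (P *ᵥ x) = P *ᵥ x := by
  rw [reflection_mulVec, mulVec_mulVec x Pᴴ P, hP, one_mulVec, two_smul, add_sub_cancel_right]

end Reflection

theorem reflection_on_Mu_general (D Q n : ℕ) (A : Matrix (Fin Q) (Fin n) ℂ)
    (Mi : Matrix (Fin D) (Fin Q) ℂ) (Ni : Matrix (Fin D) (Fin n) ℂ)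
    (F : ℝ) (hM : Miᴴ * Mi = 1)
    (hMN : Miᴴ * Ni = ((F : ℂ)⁻¹) • A)
    (u : Fin Q → ℂ) (v : Fin n → ℂ) (σi : ℝ)
    (hAu : Aᴴ.mulVec u = (σi : ℂ) • v) :
    (((2 : ℂ) • (Ni * Niᴴ) - 1) * ((2 : ℂ) • (Mi * Miᴴ) - 1)).mulVec (Mi.mulVec u) =
      ((2 * σi / F : ℝ) : ℂ) • Ni.mulVec v - Mi.mulVec u := by
  have hNM : Niᴴ * Mi = (F : ℂ)⁻¹ • Aᴴ := by
    simpa [conjTranspose_smul] using congrArg conjTranspose hMN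
  rw [← mulVec_mulVec, reflection_mulVec_range_of_isometry hM, reflection_mulVec,
    mulVec_mulVec u Niᴴ Mi, hNM, smul_mulVec, hAu, smul_smul, mulVec_smul, smul_smul]
  congr 2
  push_cast
  ring

/-- If `M` and `N` are isometries (`Mᴴ M = I`, `Nᴴ N = I`) into a common space
with `Mᴴ N = A/‖A‖_F`, and `(u, v)` is a unit singular pair of `A` with singular
value `σᵢ` (`A v = σᵢ u`, `Aᴴ u = σᵢ v`), then the reflection product
`W = (2NNᴴ − I)(2MMᴴ − I)` satisfies `W (M u) = (2σᵢ/‖A‖_F) N v − M u`. -/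
theorem reflection_on_Mu (D Q n : ℕ) (A : Matrix (Fin Q) (Fin n) ℂ)
    (Mi : Matrix (Fin D) (Fin Q) ℂ) (Ni : Matrix (Fin D) (Fin n) ℂ)
    (F : ℝ) (hF : F = Real.sqrt (∑ q, ∑ j, ‖A q j‖ ^ 2)) (hF0 : 0 < F)
    (hM : Miᴴ * Mi = 1) (hN : Niᴴ * Ni = 1)
    (hMN : Miᴴ * Ni = ((F : ℂ)⁻¹) • A)
    (u : Fin Q → ℂ) (v : Fin n → ℂ) (σi : ℝ) (hσ : 0 < σi)
    (hu : star u ⬝ᵥ u = 1) (hv : star v ⬝ᵥ v = 1)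
    (hAv : A.mulVec v = (σi : ℂ) • u) (hAu : Aᴴ.mulVec u = (σi : ℂ) • v) :
    (((2 : ℂ) • (Ni * Niᴴ) - 1) * ((2 : ℂ) • (Mi * Miᴴ) - 1)).mulVec (Mi.mulVec u) =
      ((2 * σi / F : ℝ) : ℂ) • Ni.mulVec v - Mi.mulVec u :=
  reflection_on_Mu_general D Q n A Mi Ni F hM hMN u v σi hAu
end

section
/- Under the same hypotheses (M, N isometries with M^H N = A/‖A‖_F, A = Σᵢ σᵢ uᵢ vᵢ^H), W(N vᵢ) = (4σᵢ²/‖A‖_F² − 1) N vᵢ − (2σᵢ/‖A‖_F) M uᵢ; in particular the two-dimensional subspace span{M uᵢ, N vᵢ} is invariant under W. -/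
open Matrix

/-!
With `c = σ/‖A‖_F`, `Mᴴ` maps `N v` to `c u` and `Nᴴ` maps `M u` to `c v`. Hence `2MMᴴ − 1` fixes
`M u` and sends `N v` to `2c M u − N v`, symmetrically for `2NNᴴ − 1`, so `W` maps both `M u` and
`N v` into their span with explicit coefficients.
-/

section RangeReflection

variable {R m p q : Type*} [CommRing R] [StarRing R] [Fintype m] [Fintype p] [Fintype q]
  [DecidableEq m]

/-- For an isometry `P` this is the reflection fixing the range of `P`. -/
def rangeReflection (P : Matrix m p R) : Matrix m m R := (2 : R) • (P * Pᴴ) - 1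

theorem rangeReflection_mulVec_of_conjTranspose_mulVec_eq {P : Matrix m p R} {x : p → R}
    {y : m → R} {c : R} (h : Pᴴ *ᵥ y = c • x) :
    rangeReflection P *ᵥ y = (2 * c) • (P *ᵥ x) - y := by
  rw [rangeReflection, sub_mulVec, smul_mulVec, one_mulVec, ← mulVec_mulVec, h, mulVec_smul,
    smul_smul]

theorem rangeReflection_mulVec_mulVec_of_conjTranspose_mul_self [DecidableEq p] {P : Matrix m p R}
    (hP : Pᴴ * P = 1) (x : p → R) : rangeReflection P *ᵥ (P *ᵥ x) = P *ᵥ x := by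
  have hx : Pᴴ *ᵥ (P *ᵥ x) = (1 : R) • x := by rw [mulVec_mulVec, hP, one_mulVec, one_smul]
  rw [rangeReflection_mulVec_of_conjTranspose_mulVec_eq hx]
  module

variable {M : Matrix m p R} {N : Matrix m q R} {u : p → R} {v : q → R} {c : R}

theorem rangeReflection_mul_mulVec_left [DecidableEq p] (hM : Mᴴ * M = 1) (hNM : Nᴴ *ᵥ (M *ᵥ u) = c • v) :
    (rangeReflection N * rangeReflection M) *ᵥ (M *ᵥ u) = (2 * c) • (N *ᵥ v) - M *ᵥ u := by
  rw [← mulVec_mulVec, rangeReflection_mulVec_mulVec_of_conjTranspose_mul_self hM,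
    rangeReflection_mulVec_of_conjTranspose_mulVec_eq hNM]

theorem rangeReflection_mul_mulVec_right [DecidableEq q] (hN : Nᴴ * N = 1)
    (hMN : Mᴴ *ᵥ (N *ᵥ v) = c • u) (hNM : Nᴴ *ᵥ (M *ᵥ u) = c • v) :
    (rangeReflection N * rangeReflection M) *ᵥ (N *ᵥ v) =
      (4 * c ^ 2 - 1) • (N *ᵥ v) - (2 * c) • (M *ᵥ u) := by
  rw [← mulVec_mulVec, rangeReflection_mulVec_of_conjTranspose_mulVec_eq hMN, mulVec_sub,
    mulVec_smul, rangeReflection_mulVec_of_conjTranspose_mulVec_eq hNM,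
    rangeReflection_mulVec_mulVec_of_conjTranspose_mul_self hN]
  module

end RangeReflection

theorem mulVec_mem_span_pair_of_mem {R m : Type*} [CommRing R] [Fintype m]
    {W : Matrix m m R} {a b x : m → R} (ha : W *ᵥ a ∈ Submodule.span R {a, b})
    (hb : W *ᵥ b ∈ Submodule.span R {a, b}) (hx : x ∈ Submodule.span R {a, b}) :
    W *ᵥ x ∈ Submodule.span R {a, b} := by
  have hle : Submodule.span R {a, b} ≤ (Submodule.span R {a, b}).comap W.mulVecLin :=
    Submodule.span_le.mpr (Set.insert_subset_iff.mpr ⟨ha, Set.singleton_subset_iff.mpr hb⟩)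
  exact hle hx

theorem reflection_on_Nv_general (D Q n : ℕ) (A : Matrix (Fin Q) (Fin n) ℂ)
    (Mi : Matrix (Fin D) (Fin Q) ℂ) (Ni : Matrix (Fin D) (Fin n) ℂ)
    (F : ℝ)
    (hM : Miᴴ * Mi = 1) (hN : Niᴴ * Ni = 1)
    (hMN : Miᴴ * Ni = ((F : ℂ)⁻¹) • A)
    (u : Fin Q → ℂ) (v : Fin n → ℂ) (σi : ℝ)
    (hAv : A.mulVec v = (σi : ℂ) • u) (hAu : Aᴴ.mulVec u = (σi : ℂ) • v) :
    (((2 : ℂ) • (Ni * Niᴴ) - 1) * ((2 : ℂ) • (Mi * Miᴴ) - 1)).mulVec (Ni.mulVec v) =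
        ((4 * σi ^ 2 / F ^ 2 - 1 : ℝ) : ℂ) • Ni.mulVec v -
          ((2 * σi / F : ℝ) : ℂ) • Mi.mulVec u ∧
      ∀ x ∈ Submodule.span ℂ ({Mi.mulVec u, Ni.mulVec v} : Set (Fin D → ℂ)),
        (((2 : ℂ) • (Ni * Niᴴ) - 1) * ((2 : ℂ) • (Mi * Miᴴ) - 1)).mulVec x ∈
          Submodule.span ℂ ({Mi.mulVec u, Ni.mulVec v} : Set (Fin D → ℂ)) := by
  set c : ℂ := σi / F
  have hNM : Niᴴ * Mi = ((F : ℂ)⁻¹) • Aᴴ := by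
    rw [← conjTranspose_conjTranspose Mi, ← conjTranspose_mul, hMN, conjTranspose_smul,
      star_inv₀, Complex.star_def, Complex.conj_ofReal]
  have hMNv : Miᴴ *ᵥ (Ni *ᵥ v) = c • u := by
    rw [mulVec_mulVec, hMN, smul_mulVec, hAv, smul_smul, inv_mul_eq_div]
  have hNMu : Niᴴ *ᵥ (Mi *ᵥ u) = c • v := by
    rw [mulVec_mulVec, hNM, smul_mulVec, hAu, smul_smul, inv_mul_eq_div]
  have hWb := rangeReflection_mul_mulVec_right hN hMNv hNMu
  have hWa := rangeReflection_mul_mulVec_left hM hNMu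
  have hcoeff : ((4 * σi ^ 2 / F ^ 2 - 1 : ℝ) : ℂ) = 4 * c ^ 2 - 1 := by push_cast; ring
  have hcoeff' : ((2 * σi / F : ℝ) : ℂ) = 2 * c := by push_cast; ring
  refine ⟨by rw [hcoeff, hcoeff']; exact hWb, fun x hx => mulVec_mem_span_pair_of_mem ?_ ?_ hx⟩
  · rw [← rangeReflection, ← rangeReflection, hWa]
    exact sub_mem (Submodule.smul_mem _ _ (Submodule.subset_span (by simp)))
      (Submodule.subset_span (by simp))
  · rw [← rangeReflection, ← rangeReflection, hWb]
    exact sub_mem (Submodule.smul_mem _ _ (Submodule.subset_span (by simp)))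
      (Submodule.smul_mem _ _ (Submodule.subset_span (by simp)))

/-- Under the same hypotheses (`M`, `N` isometries with `Mᴴ N = A/‖A‖_F`, and a
unit singular pair `A v = σᵢ u`, `Aᴴ u = σᵢ v` with `σᵢ > 0`), the reflection
product `W = (2NNᴴ − I)(2MMᴴ − I)` satisfies
`W (N v) = (4σᵢ²/‖A‖_F² − 1) N v − (2σᵢ/‖A‖_F) M u`; in particular the
subspace `span{M u, N v}` is invariant under `W`. -/
theorem reflection_on_Nv (D Q n : ℕ) (A : Matrix (Fin Q) (Fin n) ℂ)
    (Mi : Matrix (Fin D) (Fin Q) ℂ) (Ni : Matrix (Fin D) (Fin n) ℂ)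
    (F : ℝ) (hF : F = Real.sqrt (∑ q, ∑ j, ‖A q j‖ ^ 2)) (hF0 : 0 < F)
    (hM : Miᴴ * Mi = 1) (hN : Niᴴ * Ni = 1)
    (hMN : Miᴴ * Ni = ((F : ℂ)⁻¹) • A)
    (u : Fin Q → ℂ) (v : Fin n → ℂ) (σi : ℝ) (hσ : 0 < σi)
    (hu : star u ⬝ᵥ u = 1) (hv : star v ⬝ᵥ v = 1)
    (hAv : A.mulVec v = (σi : ℂ) • u) (hAu : Aᴴ.mulVec u = (σi : ℂ) • v) :
    (((2 : ℂ) • (Ni * Niᴴ) - 1) * ((2 : ℂ) • (Mi * Miᴴ) - 1)).mulVec (Ni.mulVec v) =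
        ((4 * σi ^ 2 / F ^ 2 - 1 : ℝ) : ℂ) • Ni.mulVec v -
          ((2 * σi / F : ℝ) : ℂ) • Mi.mulVec u ∧
      ∀ x ∈ Submodule.span ℂ ({Mi.mulVec u, Ni.mulVec v} : Set (Fin D → ℂ)),
        (((2 : ℂ) • (Ni * Niᴴ) - 1) * ((2 : ℂ) • (Mi * Miᴴ) - 1)).mulVec x ∈
          Submodule.span ℂ ({Mi.mulVec u, Ni.mulVec v} : Set (Fin D → ℂ)) :=
  reflection_on_Nv_general D Q n A Mi Ni F hM hN hMN u v σi hAv hAu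
end
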